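/- For all n ≥ 1 and 0 ≤ k ≤ n-1, the Manhattan radius of the Hales-ordered level adjacency matrix satisfies r(M^(n)_{k,k+1}) ≤ Σ_{m=0}^{n-1} C(m, floor(m/2)), with equality when k = floor(n/2). -/

import Mathlib

open Finset

/-- Hamming weight of a vertex of the hypercube `{0,1}^n`. -/
def wt {n : ℕ} (u : Fin n → Bool) : ℕ := (Finset.univ.filter fun i => u i = true).card

/-- `u` is strictly greater than `v` in lexicographic order relative to the
right-to-left order of the coordinates. -/
def rtlLexGT {n : ℕ} (u v : Fin n → Bool) : Prop :=
  ∃ i, v i < u i ∧ ∀ j, i < j → u j = v j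

/-- The Hales order on `{0,1}^n`. -/
def halesLE {n : ℕ} (u v : Fin n → Bool) : Prop :=
  wt u < wt v ∨ (wt u = wt v ∧ (u = v ∨ rtlLexGT u v))

/-- The recursively defined matrices `A_k^{(n)}`, encoded as lists of rows. -/
def A : (n : ℕ) → (k : ℕ) → List (Fin n → Bool)
  | _, 0 => [fun _ => false]
  | 0, _ + 1 => []
  | n + 1, k + 1 =>
    if k + 1 = n + 1 then [fun _ => true]
    else (A n k).map (fun u => Fin.snoc u true) ++ (A n (k + 1)).map (fun u => Fin.snoc u false)

/-- The stacking `S^{(n)} = [A_0^{(n)}; …; A_n^{(n)}]`. -/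
def Sl (n : ℕ) : List (Fin n → Bool) := (List.range (n + 1)).flatMap (A n)

/-- Entry `(i, j)` (0-based) of the adjacency matrix `M^{(n)}_{k,k'}` between the
weight-`k` and weight-`k'` levels of the hypercube, both in Hales order. -/
def Mval (n k k' : ℕ) (i j : ℕ) : ℕ :=
  if hammingDist ((A n k).getD i (fun _ => false)) ((A n k').getD j (fun _ => false)) = 1
  then 1 else 0

/-- Manhattan radius `r(M^{(n)}_{k,k'})`. -/
def mr (n k k' : ℕ) : ℕ :=
  ((Finset.range (A n k).length) ×ˢ (Finset.range (A n k').length)).sup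
    (fun p => if Mval n k k' p.1 p.2 ≠ 0 then (A n k).length - p.1 + p.2 else 0)

/-- Bandwidth of a numbering of the hypercube. -/
def numBW (n : ℕ) (η : (Fin n → Bool) ≃ Fin (2 ^ n)) : ℕ :=
  Finset.univ.sup fun p : (Fin n → Bool) × (Fin n → Bool) =>
    if hammingDist p.1 p.2 = 1 then Nat.dist (η p.1) (η p.2) else 0

/-- Bandwidth of the hypercube `Q^{(n)}`. -/
noncomputable def cubeBW (n : ℕ) : ℕ := sInf (Set.range (numBW n))

/-- Minimum edge-distance of a numbering of the hypercube. -/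
noncomputable def abwOf (n : ℕ) (η : (Fin n → Bool) ≃ Fin (2 ^ n)) : ℕ :=
  sInf {d | ∃ u v : Fin n → Bool, hammingDist u v = 1 ∧ d = Nat.dist (η u) (η v)}

/-- Antibandwidth of the hypercube `Q^{(n)}`. -/
noncomputable def cubeABW (n : ℕ) : ℕ := sSup (Set.range (abwOf n))

/-- Bandwidth of the full Hales-ordered adjacency matrix `M^{(n)}`. -/
def bwM (n : ℕ) : ℕ :=
  ((Finset.range (Sl n).length) ×ˢ (Finset.range (Sl n).length)).sup
    (fun p =>
      if hammingDist ((Sl n).getD p.1 (fun _ => false)) ((Sl n).getD p.2 (fun _ => false)) = 1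
      then Nat.dist p.1 p.2 else 0)

/-- Manhattan radius of a general `s × t` matrix. -/
def manRadius {s t : ℕ} (M : Matrix (Fin s) (Fin t) ℕ) : ℕ :=
  Finset.univ.sup fun p : Fin s × Fin t => if M p.1 p.2 ≠ 0 then s - (p.1 : ℕ) + p.2 else 0

/-!
Split off the last coordinate: the weight-`k` level of `Q^{(n+1)}` in Hales order is the
weight-`(k-1)` level of `Q^{(n)}` with a `1` appended, followed by the weight-`k` level with a `0`
appended. In these coordinates `M^{(n+1)}_{k,k+1}` is the block matrix
`[[M^{(n)}_{k-1,k}, 0], [I, M^{(n)}_{k,k+1}]]`, whose Manhattan radius is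
`C(n,k) + max (r(M^{(n)}_{k-1,k}), r(M^{(n)}_{k,k+1}))`. Induction on `n` with
`C(n,k) ≤ C(n,⌊n/2⌋)` gives the bound; at `k = ⌊(n+1)/2⌋` the binomial is the central one and one
of the two blocks is the middle level of `Q^{(n)}`, so equality propagates.
-/

section EdgeRadius

variable {n : ℕ}

def edgeRadius (R C : List (Fin n → Bool)) : ℕ :=
  ((range R.length) ×ˢ (range C.length)).sup fun p =>
    if hammingDist (R.getD p.1 (fun _ => false)) (C.getD p.2 (fun _ => false)) = 1
    then R.length - p.1 + p.2 else 0

lemma mr_eq_edgeRadius (n k k' : ℕ) : mr n k k' = edgeRadius (A n k) (A n k') := by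
  unfold mr Mval edgeRadius
  congr 1
  funext p
  split_ifs <;> simp_all

lemma edgeRadius_le_iff {R C : List (Fin n → Bool)} {B : ℕ} :
    edgeRadius R C ≤ B ↔ ∀ i j (hi : i < R.length) (hj : j < C.length),
      hammingDist R[i] C[j] = 1 → R.length - i + j ≤ B := by
  simp only [edgeRadius, Finset.sup_le_iff, mem_product, mem_range, and_imp, Prod.forall]
  refine forall₂_congr fun i j => forall₂_congr fun hi hj => ?_
  rw [List.getD_eq_getElem _ _ hi, List.getD_eq_getElem _ _ hj]
  split_ifs with h <;> simp [h]

lemma le_edgeRadius {R C : List (Fin n → Bool)} {i j : ℕ} (hi : i < R.length) (hj : j < C.length)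
    (h : hammingDist R[i] C[j] = 1) : R.length - i + j ≤ edgeRadius R C :=
  edgeRadius_le_iff.1 le_rfl i j hi hj h

lemma add_edgeRadius_le {R C : List (Fin n → Bool)} {c B : ℕ} (hc : c ≤ B)
    (h : ∀ i j (hi : i < R.length) (hj : j < C.length),
      hammingDist R[i] C[j] = 1 → c + (R.length - i + j) ≤ B) :
    c + edgeRadius R C ≤ B := by
  have : edgeRadius R C ≤ B - c :=
    edgeRadius_le_iff.2 fun i j hi hj hij => Nat.le_sub_of_add_le' (h i j hi hj hij)
  omega

@[simp]
lemma edgeRadius_nil_left (C : List (Fin n → Bool)) : edgeRadius [] C = 0 := by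
  simp [edgeRadius]

end EdgeRadius

lemma hammingDist_snoc {n : ℕ} (u v : Fin n → Bool) (b b' : Bool) :
    hammingDist (Fin.snoc u b : Fin (n + 1) → Bool) (Fin.snoc v b') =
      hammingDist u v + if b = b' then 0 else 1 := by
  unfold hammingDist
  rw [card_filter, card_filter, Fin.sum_univ_castSucc]
  simp only [Fin.snoc_castSucc, Fin.snoc_last]
  rw [← card_filter]
  by_cases h : b = b' <;> simp [h]

lemma wt_snoc {n : ℕ} (u : Fin n → Bool) (b : Bool) :
    wt (Fin.snoc u b : Fin (n + 1) → Bool) = wt u + if b then 1 else 0 := by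
  unfold wt
  rw [card_filter, card_filter, Fin.sum_univ_castSucc]
  simp [Fin.snoc_castSucc, Fin.snoc_last]

lemma snoc_const {n : ℕ} (b : Bool) :
    (Fin.snoc (fun _ => b) b : Fin (n + 1) → Bool) = fun _ => b := by
  funext i
  induction i using Fin.lastCases <;> simp

section SnocStack

variable {n : ℕ} (X Y Z : List (Fin n → Bool))

def snocStack : List (Fin (n + 1) → Bool) :=
  X.map (fun u => Fin.snoc u true) ++ Y.map (fun u => Fin.snoc u false)

@[simp]
lemma length_snocStack : (snocStack X Y).length = X.length + Y.length := by
  simp [snocStack]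

lemma getElem_snocStack_left {i : ℕ} (hi : i < X.length) :
    (snocStack X Y)[i]'(by simp; omega) = Fin.snoc X[i] true := by
  simp [snocStack, List.getElem_append_left, hi]

lemma getElem_snocStack_right {i : ℕ} (hi : i < Y.length) :
    (snocStack X Y)[X.length + i]'(by simp; omega) = Fin.snoc Y[i] false := by
  simp [snocStack, List.getElem_append_right]

variable {X Y Z}

lemma edgeRadius_snocStack_le (hXZ : ∀ x ∈ X, x ∉ Z) (hY : Y.Nodup) :
    edgeRadius (snocStack X Y) (snocStack Y Z) ≤
      Y.length + max (edgeRadius X Y) (edgeRadius Y Z) := by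
  rw [edgeRadius_le_iff]
  intro i j hi hj hij
  simp only [length_snocStack] at hi hj ⊢
  rcases lt_or_ge i X.length with hiX | hiX <;> rcases lt_or_ge j Y.length with hjY | hjY
  · rw [getElem_snocStack_left _ _ hiX, getElem_snocStack_left _ _ hjY, hammingDist_snoc] at hij
    have := le_edgeRadius hiX hjY (by simpa using hij)
    have := le_max_left (edgeRadius X Y) (edgeRadius Y Z)
    omega
  · obtain ⟨j, rfl⟩ := Nat.exists_eq_add_of_le hjY
    rw [getElem_snocStack_left _ _ hiX, getElem_snocStack_right _ _ (by omega),
      hammingDist_snoc] at hij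
    have hXZ_eq : X[i] = Z[j] := by simpa using hij
    exact (hXZ _ (List.getElem_mem hiX) (hXZ_eq ▸ List.getElem_mem _)).elim
  · obtain ⟨i, rfl⟩ := Nat.exists_eq_add_of_le hiX
    rw [getElem_snocStack_right _ _ (by omega), getElem_snocStack_left _ _ hjY,
      hammingDist_snoc] at hij
    have := hY.getElem_inj_iff.1 (by simpa using hij)
    omega
  · obtain ⟨i, rfl⟩ := Nat.exists_eq_add_of_le hiX
    obtain ⟨j, rfl⟩ := Nat.exists_eq_add_of_le hjY
    rw [getElem_snocStack_right _ _ (by omega), getElem_snocStack_right _ _ (by omega),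
      hammingDist_snoc] at hij
    have := le_edgeRadius (R := Y) (C := Z) (i := i) (j := j) (by omega) (by omega)
      (by simpa using hij)
    have := le_max_right (edgeRadius X Y) (edgeRadius Y Z)
    omega

lemma length_le_edgeRadius_snocStack :
    Y.length ≤ edgeRadius (snocStack X Y) (snocStack Y Z) := by
  rcases Nat.eq_zero_or_pos Y.length with hY0 | hY0
  · omega
  have h := le_edgeRadius (R := snocStack X Y) (C := snocStack Y Z) (i := X.length + 0) (j := 0)
    (by simp; omega) (by simp; omega)
    (by
      rw [getElem_snocStack_right _ _ hY0, getElem_snocStack_left _ _ hY0, hammingDist_snoc]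
      simp)
  simpa using h

lemma le_edgeRadius_snocStack :
    Y.length + max (edgeRadius X Y) (edgeRadius Y Z) ≤
      edgeRadius (snocStack X Y) (snocStack Y Z) := by
  rw [← max_add_add_left, max_le_iff]
  constructor
  · refine add_edgeRadius_le length_le_edgeRadius_snocStack fun i j hi hj hij => ?_
    have h := le_edgeRadius (R := snocStack X Y) (C := snocStack Y Z) (i := i) (j := j)
      (by simp; omega) (by simp; omega)
      (by
        rw [getElem_snocStack_left _ _ hi, getElem_snocStack_left _ _ hj, hammingDist_snoc]
        simpa)
    simp only [length_snocStack] at h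
    omega
  · refine add_edgeRadius_le length_le_edgeRadius_snocStack fun i j hi hj hij => ?_
    have h := le_edgeRadius (R := snocStack X Y) (C := snocStack Y Z) (i := X.length + i)
      (j := Y.length + j) (by simp; omega) (by simp; omega)
      (by
        rw [getElem_snocStack_right _ _ hi, getElem_snocStack_right _ _ hj, hammingDist_snoc]
        simpa)
    simp only [length_snocStack] at h
    omega

lemma edgeRadius_snocStack (hXZ : ∀ x ∈ X, x ∉ Z) (hY : Y.Nodup) :
    edgeRadius (snocStack X Y) (snocStack Y Z) =
      Y.length + max (edgeRadius X Y) (edgeRadius Y Z) :=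
  (edgeRadius_snocStack_le hXZ hY).antisymm le_edgeRadius_snocStack

end SnocStack

lemma A_zero (n : ℕ) : A n 0 = [fun _ => false] := by
  cases n <;> rfl

lemma A_eq_nil_of_lt : ∀ {n k : ℕ}, n < k → A n k = []
  | 0, _ + 1, _ => rfl
  | n + 1, k + 1, h => by
    rw [A, if_neg (by omega), A_eq_nil_of_lt (by omega : n < k),
      A_eq_nil_of_lt (by omega : n < k + 1)]
    rfl

lemma A_self : ∀ n : ℕ, A n n = [fun _ => true]
  | 0 => by rw [A_zero, Subsingleton.elim (fun _ => false) (fun _ => true)]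
  | n + 1 => by simp [A]

/-- The empty list stands for the (nonexistent) level of weight `-1`. -/
lemma A_succ_zero (n : ℕ) : A (n + 1) 0 = snocStack [] (A n 0) := by
  simp [snocStack, A_zero, snoc_const]

lemma A_succ_succ (n k : ℕ) : A (n + 1) (k + 1) = snocStack (A n k) (A n (k + 1)) := by
  rw [A]
  split_ifs with h
  · obtain rfl : k = n := by omega
    simp [snocStack, A_self, A_eq_nil_of_lt (Nat.lt_succ_self k), snoc_const]
  · rfl

lemma length_A : ∀ n k : ℕ, (A n k).length = n.choose k
  | n, 0 => by simp [A_zero]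
  | 0, _ + 1 => rfl
  | n + 1, k + 1 => by
    simp [A_succ_succ, length_A n k, length_A n (k + 1), Nat.choose_succ_succ]

lemma wt_of_mem_A : ∀ {n k : ℕ} {u : Fin n → Bool}, u ∈ A n k → wt u = k
  | n, 0, u, h => by simp_all [A_zero, wt]
  | 0, _ + 1, _, h => by simp [A] at h
  | n + 1, k + 1, u, h => by
    rw [A_succ_succ] at h
    simp only [snocStack, List.mem_append, List.mem_map] at h
    rcases h with ⟨v, hv, rfl⟩ | ⟨v, hv, rfl⟩ <;> simp [wt_snoc, wt_of_mem_A hv]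

lemma nodup_A : ∀ n k : ℕ, (A n k).Nodup
  | n, 0 => by simp [A_zero]
  | 0, _ + 1 => List.nodup_nil
  | n + 1, k + 1 => by
    rw [A_succ_succ, snocStack]
    refine ((nodup_A n k).map fun _ _ h => Fin.snoc_injective2 h |>.1).append
      ((nodup_A n (k + 1)).map fun _ _ h => Fin.snoc_injective2 h |>.1) ?_
    simp only [List.disjoint_left, List.mem_map]
    rintro _ ⟨u, -, rfl⟩ ⟨v, -, h⟩
    simpa using congrFun h (Fin.last n)

lemma mr_zero (k : ℕ) : mr 0 k (k + 1) = 0 := by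
  simp [mr, A]

lemma mr_succ_zero (n : ℕ) : mr (n + 1) 0 1 = mr n 0 1 + 1 := by
  rw [mr_eq_edgeRadius, A_succ_zero, A_succ_succ, edgeRadius_snocStack (by simp)
    (nodup_A n 0), ← mr_eq_edgeRadius]
  simp [A_zero, Nat.add_comm]

lemma mr_succ_succ (n k : ℕ) :
    mr (n + 1) (k + 1) (k + 2) =
      n.choose (k + 1) + max (mr n k (k + 1)) (mr n (k + 1) (k + 2)) := by
  have hdisj : ∀ u ∈ A n k, u ∉ A n (k + 2) := fun u hu hu' => by
    have := (wt_of_mem_A hu).symm.trans (wt_of_mem_A hu')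
    omega
  rw [mr_eq_edgeRadius, A_succ_succ, A_succ_succ,
    edgeRadius_snocStack hdisj (nodup_A n (k + 1)), length_A, mr_eq_edgeRadius,
    mr_eq_edgeRadius]

lemma choose_succ_div_two (n : ℕ) : n.choose ((n + 1) / 2) = n.choose (n / 2) := by
  rcases Nat.even_or_odd' n with ⟨m, rfl | rfl⟩
  · congr 1
    omega
  · rw [show (2 * m + 1 + 1) / 2 = m + 1 by omega, show (2 * m + 1) / 2 = m by omega,
      Nat.choose_symm_half]

lemma mr_le_sum_choose_half : ∀ n k : ℕ, mr n k (k + 1) ≤ ∑ m ∈ range n, m.choose (m / 2)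
  | 0, k => by simp [mr_zero]
  | n + 1, 0 => by
    rw [mr_succ_zero, sum_range_succ]
    have : mr n 0 1 ≤ _ := mr_le_sum_choose_half n 0
    have := Nat.choose_pos (n.div_le_self 2)
    omega
  | n + 1, k + 1 => by
    rw [mr_succ_succ, sum_range_succ]
    have : mr n k (k + 1) ≤ _ := mr_le_sum_choose_half n k
    have : mr n (k + 1) (k + 2) ≤ _ := mr_le_sum_choose_half n (k + 1)
    have := Nat.choose_le_middle (k + 1) n
    omega

lemma mr_middle_eq_sum_choose_half :
    ∀ n : ℕ, mr n (n / 2) (n / 2 + 1) = ∑ m ∈ range n, m.choose (m / 2)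
  | 0 => mr_zero 0
  | n + 1 => by
    obtain rfl | ⟨k, hk⟩ : n = 0 ∨ ∃ k, (n + 1) / 2 = k + 1 :=
      (Nat.eq_zero_or_pos n).imp id fun _ => ⟨(n + 1) / 2 - 1, by omega⟩
    · simp [mr_succ_zero, mr_zero]
    have hchoose : n.choose (k + 1) = n.choose (n / 2) := hk ▸ choose_succ_div_two n
    rw [hk, mr_succ_succ, sum_range_succ, hchoose, Nat.add_comm]
    congr 1
    have hk_le : mr n k (k + 1) ≤ _ := mr_le_sum_choose_half n k
    have hk_succ_le : mr n (k + 1) (k + 2) ≤ _ := mr_le_sum_choose_half n (k + 1)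
    have hmid := mr_middle_eq_sum_choose_half n
    rcases (by omega : n / 2 = k ∨ n / 2 = k + 1) with h | h <;> rw [h] at hmid
    · rw [hmid, max_eq_left (hmid ▸ hk_succ_le)]
    · rw [hmid, max_eq_right (hmid ▸ hk_le)]

theorem manhattan_radius_bound_general (n : ℕ) :
    (∀ k, k + 1 ≤ n → mr n k (k + 1) ≤ ∑ m ∈ Finset.range n, m.choose (m / 2)) ∧
      mr n (n / 2) (n / 2 + 1) = ∑ m ∈ Finset.range n, m.choose (m / 2) :=
  ⟨fun k _ => mr_le_sum_choose_half n k, mr_middle_eq_sum_choose_half n⟩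

/-- For `n ≥ 1` and `0 ≤ k ≤ n-1`,
`r(M^{(n)}_{k,k+1}) ≤ ∑_{m=0}^{n-1} C(m,⌊m/2⌋)`, with equality when `k = ⌊n/2⌋`. -/
theorem manhattan_radius_bound (n : ℕ) (hn : 1 ≤ n) :
    (∀ k, k + 1 ≤ n → mr n k (k + 1) ≤ ∑ m ∈ Finset.range n, m.choose (m / 2)) ∧
      mr n (n / 2) (n / 2 + 1) = ∑ m ∈ Finset.range n, m.choose (m / 2) :=
  manhattan_radius_bound_general n
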